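/- Let H₁, H₂ be separable complex Hilbert spaces, H = H₁ ⊗ H₂, (X, μ) = (X₁ × X₂, μ₁ ⊗ μ₂) the product of measure spaces with σ-finite positive measures, and let F = F₁ ⊗ F₂ be a continuous frame for H with respect to (X, μ), where F₁, F₂ are continuous frames for H₁, H₂. Then: (i) for simple tensors, (T_F^*(f₁ ⊗ f₂))(x₁,x₂) = ⟨f₁, F₁(x₁)⟩⟨f₂, F₂(x₂)⟩; (ii) the frame operator factorizes as S_{F₁⊗F₂} = S_{F₁} ⊗ S_{F₂}, where S_{F₁} ⊗ S_{F₂} is the unique bounded operator on H₁ ⊗ H₂ satisfying (S_{F₁} ⊗ S_{F₂})(u ⊗ v) = S_{F₁}u ⊗ S_{F₂}v; (iii) the canonical dual frame of F₁ ⊗ F₂ is S_{F₁}^{-1}F₁ ⊗ S_{F₂}^{-1}F₂, i.e. S_{F₁⊗F₂}^{-1}(F₁ ⊗ F₂)(x₁,x₂) = (S_{F₁}^{-1}F₁(x₁)) ⊗ (S_{F₂}^{-1}F₂(x₂)). -/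

import Mathlib

/-!
Test the frame operator of `F₁ ⊗ F₂` against simple tensors:
`⟨S(u ⊗ v), a ⊗ b⟩ = ∫∫ conj⟨u, F₁⟩⟨a, F₁⟩ · conj⟨v, F₂⟩⟨b, F₂⟩`, and Fubini factors this
integral as `⟨S₁u, a⟩⟨S₂v, b⟩ = ⟨S₁u ⊗ S₂v, a ⊗ b⟩`. Simple tensors span a dense subspace,
so `S(u ⊗ v) = S₁u ⊗ S₂v`. Writing `F₁ x₁ ⊗ F₂ x₂ = S(S₁⁻¹F₁ x₁ ⊗ S₂⁻¹F₂ x₂)` and applying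
`S⁻¹` gives the dual frame.
-/

open MeasureTheory ENNReal

noncomputable section

namespace ContFrame

variable {X : Type*} {H : Type*}

/-- The paper's inner product `⟨f, g⟩`: linear in the first argument and
conjugate-linear in the second (Mathlib's `inner` is conjugate-linear in the first). -/
def pinner [NormedAddCommGroup H] [InnerProductSpace ℂ H] (f g : H) : ℂ :=
  @inner ℂ _ _ g f

def frameInt [MeasurableSpace X] [NormedAddCommGroup H] [InnerProductSpace ℂ H]
    (μ : Measure X) (F : X → H) (f : H) : ℝ≥0∞ :=
  ∫⁻ x, (‖pinner f (F x)‖₊ : ℝ≥0∞) ^ 2 ∂μ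

def WeaklyMeasurable [MeasurableSpace X] [NormedAddCommGroup H] [InnerProductSpace ℂ H]
    (μ : Measure X) (F : X → H) : Prop :=
  ∀ f : H, AEMeasurable (fun x => pinner f (F x)) μ

def IsBesselMapping [MeasurableSpace X] [NormedAddCommGroup H] [InnerProductSpace ℂ H]
    (μ : Measure X) (F : X → H) (B : ℝ≥0∞) : Prop :=
  B < ⊤ ∧ WeaklyMeasurable μ F ∧
    ∀ f : H, frameInt μ F f ≤ B * (‖f‖₊ : ℝ≥0∞) ^ 2

def IsContinuousFrame [MeasurableSpace X] [NormedAddCommGroup H] [InnerProductSpace ℂ H]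
    (μ : Measure X) (F : X → H) (A B : ℝ≥0∞) : Prop :=
  0 < A ∧ A ≤ B ∧ B < ⊤ ∧ WeaklyMeasurable μ F ∧
    ∀ f : H, A * (‖f‖₊ : ℝ≥0∞) ^ 2 ≤ frameInt μ F f ∧
      frameInt μ F f ≤ B * (‖f‖₊ : ℝ≥0∞) ^ 2

/-- A realization of the Hilbert tensor product `H = H₁ ⊗ H₂`: a bilinear map
`tmul` whose simple tensors satisfy `⟪a⊗b, c⊗d⟫ = ⟪a,c⟫⟪b,d⟫` and span a dense subspace. -/
structure HilbertTensorProduct (H₁ H₂ H : Type*)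
    [NormedAddCommGroup H₁] [InnerProductSpace ℂ H₁]
    [NormedAddCommGroup H₂] [InnerProductSpace ℂ H₂]
    [NormedAddCommGroup H] [InnerProductSpace ℂ H] where
  tmul : H₁ →ₗ[ℂ] H₂ →ₗ[ℂ] H
  inner_tmul : ∀ (a c : H₁) (b d : H₂),
    (inner ℂ (tmul a b) (tmul c d) : ℂ) = (inner ℂ a c : ℂ) * (inner ℂ b d : ℂ)
  dense_span : Dense (↑(Submodule.span ℂ {z : H | ∃ a b, z = tmul a b}) : Set H)

/-- `T : L²(X,μ) → H` is the synthesis operator of `F`, characterized by the fact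
that its adjoint is the analysis operator `(T^* f)(x) = ⟨f, F x⟩`. -/
def IsSynthesisOperator {X H : Type*} [MeasurableSpace X]
    [NormedAddCommGroup H] [InnerProductSpace ℂ H] [CompleteSpace H]
    (μ : Measure X) (F : X → H) (T : Lp ℂ 2 μ →L[ℂ] H) : Prop :=
  ∀ f : H, (ContinuousLinearMap.adjoint T f : X → ℂ) =ᵐ[μ] fun x => pinner f (F x)

open scoped InnerProduct InnerProductSpace

section TensorProduct

variable {H₁ H₂ H : Type*}
  [NormedAddCommGroup H₁] [InnerProductSpace ℂ H₁]
  [NormedAddCommGroup H₂] [InnerProductSpace ℂ H₂]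
  [NormedAddCommGroup H] [InnerProductSpace ℂ H]

theorem HilbertTensorProduct.ext_inner_tmul (tp : HilbertTensorProduct H₁ H₂ H) {x y : H}
    (h : ∀ a b, ⟪x, tp.tmul a b⟫_ℂ = ⟪y, tp.tmul a b⟫_ℂ) : x = y :=
  tp.dense_span.eq_of_inner_left ℂ fun v hv => by
    induction hv using Submodule.span_induction with
    | mem _ hz => obtain ⟨a, b, rfl⟩ := hz; exact h a b
    | zero => simp only [inner_zero_right]
    | add _ _ _ _ hu hv => simp only [inner_add_right, hu, hv]
    | smul c _ _ hu => simp only [inner_smul_right, hu]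

theorem HilbertTensorProduct.pinner_tmul (tp : HilbertTensorProduct H₁ H₂ H)
    (a c : H₁) (b d : H₂) :
    pinner (tp.tmul a b) (tp.tmul c d) = pinner a c * pinner b d :=
  tp.inner_tmul c a d b

end TensorProduct

theorem IsSynthesisOperator.inner_comp_adjoint_apply [MeasurableSpace X]
    [NormedAddCommGroup H] [InnerProductSpace ℂ H] [CompleteSpace H]
    {μ : Measure X} {F : X → H} {T : Lp ℂ 2 μ →L[ℂ] H} (hT : IsSynthesisOperator μ F T)
    (f g : H) :
    ⟪(T ∘L T†) f, g⟫_ℂ = ∫ x, starRingEnd ℂ (pinner f (F x)) * pinner g (F x) ∂μ := by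
  rw [ContinuousLinearMap.comp_apply, ← ContinuousLinearMap.adjoint_inner_right, L2.inner_def]
  refine integral_congr_ae ?_
  filter_upwards [hT f, hT g] with x hf hg
  rw [hf, hg, RCLike.inner_apply']

theorem IsSynthesisOperator.comp_adjoint_tmul {X₁ X₂ H₁ H₂ H : Type*}
    [MeasurableSpace X₁] [MeasurableSpace X₂]
    [NormedAddCommGroup H₁] [InnerProductSpace ℂ H₁] [CompleteSpace H₁]
    [NormedAddCommGroup H₂] [InnerProductSpace ℂ H₂] [CompleteSpace H₂]
    [NormedAddCommGroup H] [InnerProductSpace ℂ H] [CompleteSpace H]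
    {μ₁ : Measure X₁} {μ₂ : Measure X₂} [SFinite μ₁] [SFinite μ₂]
    (tp : HilbertTensorProduct H₁ H₂ H)
    {F₁ : X₁ → H₁} {F₂ : X₂ → H₂} {T : Lp ℂ 2 (μ₁.prod μ₂) →L[ℂ] H}
    {T₁ : Lp ℂ 2 μ₁ →L[ℂ] H₁} {T₂ : Lp ℂ 2 μ₂ →L[ℂ] H₂}
    (hT : IsSynthesisOperator (μ₁.prod μ₂) (fun x => tp.tmul (F₁ x.1) (F₂ x.2)) T)
    (hT₁ : IsSynthesisOperator μ₁ F₁ T₁) (hT₂ : IsSynthesisOperator μ₂ F₂ T₂) (u : H₁) (v : H₂) :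
    (T ∘L T†) (tp.tmul u v) = tp.tmul ((T₁ ∘L T₁†) u) ((T₂ ∘L T₂†) v) := by
  refine tp.ext_inner_tmul fun a b => ?_
  rw [tp.inner_tmul, hT.inner_comp_adjoint_apply, hT₁.inner_comp_adjoint_apply,
    hT₂.inner_comp_adjoint_apply, ← integral_prod_mul]
  congr 1 with x
  simp only [tp.pinner_tmul, map_mul]
  ring

theorem apply_eq_of_leftInverse_of_semiconj₂ {α β γ : Type*} {t : α → β → γ}
    {S Sinv : γ → γ} {S₁ S₁inv : α → α} {S₂ S₂inv : β → β}
    (hS : ∀ u v, S (t u v) = t (S₁ u) (S₂ v)) (hinv : Function.LeftInverse Sinv S)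
    (h₁ : Function.RightInverse S₁inv S₁) (h₂ : Function.RightInverse S₂inv S₂) (u : α) (v : β) :
    Sinv (t u v) = t (S₁inv u) (S₂inv v) := by
  conv_lhs => rw [← h₁ u, ← h₂ v, ← hS, hinv]

theorem tensor_frame_operator
    {X₁ X₂ : Type*} [MeasurableSpace X₁] [MeasurableSpace X₂]
    {H₁ H₂ H : Type*}
    [NormedAddCommGroup H₁] [InnerProductSpace ℂ H₁] [CompleteSpace H₁]
    [NormedAddCommGroup H₂] [InnerProductSpace ℂ H₂] [CompleteSpace H₂]
    [NormedAddCommGroup H] [InnerProductSpace ℂ H] [CompleteSpace H]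
    (μ₁ : Measure X₁) (μ₂ : Measure X₂) [SigmaFinite μ₁] [SigmaFinite μ₂]
    (tp : HilbertTensorProduct H₁ H₂ H)
    (F₁ : X₁ → H₁) (F₂ : X₂ → H₂)
    (TF : Lp ℂ 2 (μ₁.prod μ₂) →L[ℂ] H)
    (hTF : IsSynthesisOperator (μ₁.prod μ₂)
      (fun x : X₁ × X₂ => tp.tmul (F₁ x.1) (F₂ x.2)) TF)
    (TF₁ : Lp ℂ 2 μ₁ →L[ℂ] H₁) (hTF₁ : IsSynthesisOperator μ₁ F₁ TF₁)
    (TF₂ : Lp ℂ 2 μ₂ →L[ℂ] H₂) (hTF₂ : IsSynthesisOperator μ₂ F₂ TF₂) :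
    -- (i) the analysis operator on simple tensors
    (∀ (f₁ : H₁) (f₂ : H₂),
      (ContinuousLinearMap.adjoint TF (tp.tmul f₁ f₂) : X₁ × X₂ → ℂ)
        =ᵐ[μ₁.prod μ₂] fun x => pinner f₁ (F₁ x.1) * pinner f₂ (F₂ x.2)) ∧
    -- (ii) `S_{F₁⊗F₂} = S_{F₁} ⊗ S_{F₂}` (on simple tensors, hence everywhere by density)
    (∀ (u : H₁) (v : H₂),
      (TF.comp (ContinuousLinearMap.adjoint TF)) (tp.tmul u v)
        = tp.tmul ((TF₁.comp (ContinuousLinearMap.adjoint TF₁)) u)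
            ((TF₂.comp (ContinuousLinearMap.adjoint TF₂)) v)) ∧
    -- (iii) the canonical dual frame of `F₁ ⊗ F₂` is `S_{F₁}^{-1}F₁ ⊗ S_{F₂}^{-1}F₂`
    (∀ (Sinv : H →L[ℂ] H) (S₁inv : H₁ →L[ℂ] H₁) (S₂inv : H₂ →L[ℂ] H₂),
      Sinv.comp (TF.comp (ContinuousLinearMap.adjoint TF)) = ContinuousLinearMap.id ℂ H →
      (TF.comp (ContinuousLinearMap.adjoint TF)).comp Sinv = ContinuousLinearMap.id ℂ H →
      S₁inv.comp (TF₁.comp (ContinuousLinearMap.adjoint TF₁)) = ContinuousLinearMap.id ℂ H₁ →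
      (TF₁.comp (ContinuousLinearMap.adjoint TF₁)).comp S₁inv = ContinuousLinearMap.id ℂ H₁ →
      S₂inv.comp (TF₂.comp (ContinuousLinearMap.adjoint TF₂)) = ContinuousLinearMap.id ℂ H₂ →
      (TF₂.comp (ContinuousLinearMap.adjoint TF₂)).comp S₂inv = ContinuousLinearMap.id ℂ H₂ →
      ∀ (x₁ : X₁) (x₂ : X₂),
        Sinv (tp.tmul (F₁ x₁) (F₂ x₂)) = tp.tmul (S₁inv (F₁ x₁)) (S₂inv (F₂ x₂))) := by
  have frame_op_tmul := hTF.comp_adjoint_tmul tp hTF₁ hTF₂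
  refine ⟨fun f₁ f₂ => (hTF _).trans (.of_eq (funext fun x => tp.pinner_tmul ..)),
    frame_op_tmul, ?_⟩
  intro Sinv S₁inv S₂inv hinv _ _ hinv₁ _ hinv₂ x₁ x₂
  exact apply_eq_of_leftInverse_of_semiconj₂ frame_op_tmul (DFunLike.congr_fun hinv)
    (DFunLike.congr_fun hinv₁) (DFunLike.congr_fun hinv₂) _ _

end ContFrame
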